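/- arXiv:2403.05439 — 2 statements merged into one kernel-verified Lean document; each statement's English description precedes it below -/
import Mathlib

section
/- Let G be a finite simple graph, let v be a leaf of G (a vertex of degree 1) with unique neighbor w, and let G' = G − v be the induced subgraph obtained by deleting v (and the edge vw). For any Scarf face σ of I(G'), the set σ ∪ {vw} is a Scarf face of I(G) if and only if dist_G(e, vw) ≠ 1 for every edge e ∈ σ. -/
/-! Since edge monomials are squarefree, `lcm τ = lcm σ` just says that `τ` and `σ` cover the
same vertices. If `σ` is a Scarf face and both endpoints of an edge `f` of `G` are covered by edges
of `σ` other than `f`, then `σ ∪ {f}` and `σ \ {f}` cover the same vertices as `σ`, so both would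
equal `σ`, which is absurd. An edge joining two edges of `σ` at distance 1 is such an `f`.

Conversely, a set `τ` of edges covering the same vertices as `σ ∪ {vw}` contains `vw`, the only
edge at the leaf `v`, and `τ \ {vw}` covers the same vertices as `σ` away from `w`. If no edge of
`σ` is at distance 1 from `vw`, every edge of `σ` through a neighbour of `w` contains `w`; this
forces the two covers to agree at `w` as well, and the Scarf property of `σ` in `G - v` gives
`τ \ {vw} = σ`. -/

/-- The monomial (exponent vector) of an edge: `1` on its endpoints, `0` elsewhere. -/
def edgeMon {V : Type*} [DecidableEq V] (e : Sym2 V) : V → ℕ :=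
  fun x => if x ∈ e then 1 else 0

/-- The lcm (componentwise max) of the monomials of a finite set of edges. -/
def eLcm {V : Type*} [DecidableEq V] (σ : Finset (Sym2 V)) : V → ℕ :=
  σ.sup edgeMon

/-- `σ` is a Scarf face of the edge ideal `I(G)`, identified with a set of edges of `G`:
its lcm is distinct from the lcm of any other set of edges of `G`. -/
def IsScarf {V : Type*} [DecidableEq V] (G : SimpleGraph V) (σ : Finset (Sym2 V)) : Prop :=
  (∀ e ∈ σ, e ∈ G.edgeSet) ∧
    ∀ τ : Finset (Sym2 V), (∀ e ∈ τ, e ∈ G.edgeSet) → eLcm τ = eLcm σ → τ = σ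

/-- `dist_G(e, f) = 0`: the two edges share a vertex. -/
def Dist0 {V : Type*} (e f : Sym2 V) : Prop := ∃ x, x ∈ e ∧ x ∈ f

/-- `dist_G(e, f) = 1`: the edges are vertex-disjoint, but some endpoint of `e` is
adjacent in `G` to some endpoint of `f`. -/
def Dist1 {V : Type*} (G : SimpleGraph V) (e f : Sym2 V) : Prop :=
  ¬ Dist0 e f ∧ ∃ x ∈ e, ∃ y ∈ f, G.Adj x y

/-- The graph `G - v`: delete the vertex `v`, i.e. all edges incident to `v`
(keeping the vertex set). -/
def delVert {V : Type*} (G : SimpleGraph V) (v : V) : SimpleGraph V where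
  Adj x y := G.Adj x y ∧ x ≠ v ∧ y ≠ v
  symm := ⟨fun x y h => ⟨h.1.symm, h.2.2, h.2.1⟩⟩
  loopless := ⟨fun x h => h.1.ne rfl⟩

section

variable {V : Type*}

def vertexSupport (σ : Finset (Sym2 V)) : Set V := {u | ∃ e ∈ σ, u ∈ e}

@[simp]
lemma mem_vertexSupport {σ : Finset (Sym2 V)} {u : V} :
    u ∈ vertexSupport σ ↔ ∃ e ∈ σ, u ∈ e :=
  Iff.rfl

lemma mem_delVert_edgeSet {G : SimpleGraph V} {v : V} {e : Sym2 V} :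
    e ∈ (delVert G v).edgeSet ↔ e ∈ G.edgeSet ∧ v ∉ e := by
  induction e using Sym2.ind with
  | _ a b =>
    simp only [SimpleGraph.mem_edgeSet, Sym2.mem_iff, not_or]
    exact ⟨fun ⟨h, ha, hb⟩ => ⟨h, Ne.symm ha, Ne.symm hb⟩,
      fun ⟨h, ha, hb⟩ => ⟨h, Ne.symm ha, Ne.symm hb⟩⟩

lemma not_dist0_mk {e : Sym2 V} {v w : V} (hv : v ∉ e) (hw : w ∉ e) : ¬ Dist0 e s(v, w) := by
  rintro ⟨x, hxe, hx⟩
  rcases Sym2.mem_iff.1 hx with rfl | rfl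
  exacts [hv hxe, hw hxe]

lemma eq_mk_of_mem_edgeSet_of_leaf {G : SimpleGraph V} {v w : V}
    (hleaf : ∀ x, G.Adj v x → x = w) {e : Sym2 V} (he : e ∈ G.edgeSet) (hv : v ∈ e) :
    e = s(v, w) := by
  obtain ⟨z, rfl⟩ := Sym2.mem_iff_exists.1 hv
  rw [hleaf z he]

variable [DecidableEq V]

@[simp]
lemma mem_vertexSupport_insert {e : Sym2 V} {σ : Finset (Sym2 V)} {u : V} :
    u ∈ vertexSupport (insert e σ) ↔ u ∈ e ∨ u ∈ vertexSupport σ := by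
  simp

lemma eLcm_eq_indicator (σ : Finset (Sym2 V)) : eLcm σ = (vertexSupport σ).indicator 1 := by
  funext u
  rw [eLcm, Finset.sup_apply]
  by_cases hu : u ∈ vertexSupport σ
  · rw [Set.indicator_of_mem hu]
    obtain ⟨e, he, hue⟩ := hu
    refine le_antisymm (Finset.sup_le fun f _ => ?_) ?_
    · unfold edgeMon; split <;> simp
    · exact le_of_eq_of_le (by simp [edgeMon, hue]) (Finset.le_sup (f := (edgeMon · u)) he)
  · rw [Set.indicator_of_notMem hu]
    exact (Finset.sup_eq_bot_iff _ _).2 fun e he => if_neg fun hue => hu ⟨e, he, hue⟩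

lemma eLcm_eq_eLcm_iff {σ τ : Finset (Sym2 V)} :
    eLcm τ = eLcm σ ↔ vertexSupport τ = vertexSupport σ := by
  rw [eLcm_eq_indicator, eLcm_eq_indicator]
  exact ⟨Set.indicator_one_inj ℕ, fun h => h ▸ rfl⟩

lemma IsScarf.exists_mem_notMem_vertexSupport_erase {G : SimpleGraph V} {σ : Finset (Sym2 V)}
    (hσ : IsScarf G σ) {f : Sym2 V} (hf : f ∈ G.edgeSet) :
    ∃ u ∈ f, u ∉ vertexSupport (σ.erase f) := by
  by_contra! hcov
  have hsub : vertexSupport (σ.erase f) ⊆ vertexSupport σ :=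
    fun u ⟨e, he, hue⟩ => ⟨e, Finset.mem_of_mem_erase he, hue⟩
  have hinsert : insert f σ = σ := by
    refine hσ.2 _ (Finset.forall_mem_insert _ _ _ |>.2 ⟨hf, hσ.1⟩) (eLcm_eq_eLcm_iff.2 ?_)
    ext u
    rw [mem_vertexSupport_insert]
    exact ⟨fun h => h.elim (fun hu => hsub (hcov u hu)) id, Or.inr⟩
  have herase : σ.erase f = σ := by
    refine hσ.2 _ (fun e he => hσ.1 e (Finset.mem_of_mem_erase he)) (eLcm_eq_eLcm_iff.2 ?_)
    refine hsub.antisymm fun u ⟨e, he, hue⟩ => ?_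
    by_cases hef : e = f
    · exact hcov u (hef ▸ hue)
    · exact ⟨e, Finset.mem_erase.2 ⟨hef, he⟩, hue⟩
  have hfσ : f ∈ σ := hinsert ▸ Finset.mem_insert_self f σ
  exact Finset.notMem_erase f σ (by rwa [herase])

theorem IsScarf.not_dist1 {G : SimpleGraph V} {σ : Finset (Sym2 V)} (hσ : IsScarf G σ)
    {e f : Sym2 V} (he : e ∈ σ) (hf : f ∈ σ) : ¬ Dist1 G e f := by
  rintro ⟨hdisj, x, hx, y, hy, hxy⟩
  obtain ⟨u, hu, hcov⟩ := hσ.exists_mem_notMem_vertexSupport_erase (G.mem_edgeSet.2 hxy)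
  apply hcov
  rcases Sym2.mem_iff.1 hu with rfl | rfl
  · refine ⟨e, Finset.mem_erase.2 ⟨?_, he⟩, hx⟩
    rintro rfl
    exact hdisj ⟨y, Sym2.mem_mk_right u y, hy⟩
  · refine ⟨f, Finset.mem_erase.2 ⟨?_, hf⟩, hy⟩
    rintro rfl
    exact hdisj ⟨x, hx, Sym2.mem_mk_left x u⟩

theorem IsScarf.vertexSupport_eq_of_forall_ne {H : SimpleGraph V} {σ τ : Finset (Sym2 V)}
    (hσ : IsScarf H σ) (hτ : ∀ e ∈ τ, e ∈ H.edgeSet) (w : V)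
    (hw : ∀ g ∈ σ, ∀ z ∈ g, H.Adj z w → w ∈ g)
    (hagree : ∀ u, u ≠ w → (u ∈ vertexSupport τ ↔ u ∈ vertexSupport σ)) :
    vertexSupport τ = vertexSupport σ := by
  have hwτ : w ∈ vertexSupport τ → w ∈ vertexSupport σ := by
    rintro ⟨e, he, hwe⟩
    by_contra hwσ
    obtain ⟨z, rfl⟩ := Sym2.mem_iff_exists.1 hwe
    have hwz : H.Adj w z := hτ _ he
    obtain ⟨g, hg, hzg⟩ := (hagree z hwz.ne').1 ⟨_, he, Sym2.mem_mk_right w z⟩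
    exact hwσ ⟨g, hg, hw g hg z hzg hwz.symm⟩
  have hwσ : w ∈ vertexSupport σ → w ∈ vertexSupport τ := by
    rintro ⟨e, he, hwe⟩
    by_contra hwτ
    obtain ⟨z, rfl⟩ := Sym2.mem_iff_exists.1 hwe
    have hwz : H.Adj w z := hσ.1 _ he
    -- `τ` misses only `w` from the support of `σ`, so adding `wz` recovers `σ`
    have hτσ : insert s(w, z) τ = σ := by
      refine hσ.2 _ (Finset.forall_mem_insert _ _ _ |>.2 ⟨hwz, hτ⟩) (eLcm_eq_eLcm_iff.2 ?_)
      ext u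
      rw [mem_vertexSupport_insert]
      constructor
      · rintro (hu | hu)
        · exact ⟨_, he, hu⟩
        · exact (hagree u (by rintro rfl; exact hwτ hu)).1 hu
      · intro hu
        by_cases huw : u = w
        · exact Or.inl (huw ▸ Sym2.mem_mk_left w z)
        · exact Or.inr ((hagree u huw).2 hu)
    obtain ⟨g, hg, hzg⟩ := (hagree z hwz.ne').2 ⟨_, he, Sym2.mem_mk_right w z⟩
    have hgσ : g ∈ σ := hτσ ▸ Finset.mem_insert_of_mem hg
    exact hwτ ⟨g, hg, hw g hgσ z hzg hwz.symm⟩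
  ext u
  by_cases huw : u = w
  · subst huw
    exact ⟨hwτ, hwσ⟩
  · exact hagree u huw

theorem isScarf_insert_leaf {G : SimpleGraph V} {v w : V} (hvw : G.Adj v w)
    (hleaf : ∀ x, G.Adj v x → x = w) {σ : Finset (Sym2 V)} (hσ : IsScarf (delVert G v) σ)
    (hdist : ∀ e ∈ σ, ¬ Dist1 G e s(v, w)) :
    IsScarf G (insert s(v, w) σ) := by
  have hσG (e) (he : e ∈ σ) : e ∈ G.edgeSet ∧ v ∉ e := mem_delVert_edgeSet.1 (hσ.1 e he)
  refine ⟨Finset.forall_mem_insert _ _ _ |>.2 ⟨hvw, fun e he => (hσG e he).1⟩, fun τ hτ hlcm => ?_⟩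
  rw [eLcm_eq_eLcm_iff] at hlcm
  have hvwτ : s(v, w) ∈ τ := by
    obtain ⟨e, he, hve⟩ : v ∈ vertexSupport τ := hlcm ▸ mem_vertexSupport_insert.2
      (Or.inl (Sym2.mem_mk_left v w))
    rwa [← eq_mk_of_mem_edgeSet_of_leaf hleaf (hτ e he) hve]
  have hτ' (e) (he : e ∈ τ.erase s(v, w)) : e ∈ (delVert G v).edgeSet := by
    obtain ⟨hne, heτ⟩ := Finset.mem_erase.1 he
    exact mem_delVert_edgeSet.2
      ⟨hτ e heτ, fun hve => hne (eq_mk_of_mem_edgeSet_of_leaf hleaf (hτ e heτ) hve)⟩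
  rw [← Finset.insert_erase hvwτ] at hlcm ⊢
  congr 1
  refine hσ.2 _ hτ' (eLcm_eq_eLcm_iff.2 (hσ.vertexSupport_eq_of_forall_ne hτ' w ?_ ?_))
  · intro g hg z hzg hzw
    by_contra hwg
    exact hdist g hg ⟨not_dist0_mk (hσG g hg).2 hwg, z, hzg, w, Sym2.mem_mk_right v w, hzw.1⟩
  · intro u huw
    by_cases huv : u = v
    · subst huv
      exact iff_of_false (fun ⟨e, he, hue⟩ => (mem_delVert_edgeSet.1 (hτ' e he)).2 hue)
        (fun ⟨e, he, hue⟩ => (hσG e he).2 hue)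
    · simpa [huv, huw] using Set.ext_iff.1 hlcm u

end

theorem stmt11_general {V : Type*} [DecidableEq V] (G : SimpleGraph V) (v w : V)
    (hvw : G.Adj v w) (hleaf : ∀ x, G.Adj v x → x = w)
    (σ : Finset (Sym2 V)) (hσ : IsScarf (delVert G v) σ) :
    IsScarf G (insert s(v, w) σ) ↔ ∀ e ∈ σ, ¬ Dist1 G e s(v, w) :=
  ⟨fun h _ he => h.not_dist1 (Finset.mem_insert_of_mem he) (Finset.mem_insert_self _ _),
    isScarf_insert_leaf hvw hleaf hσ⟩

theorem stmt11 {V : Type*} [Fintype V] [DecidableEq V] (G : SimpleGraph V) (v w : V)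
    (hvw : G.Adj v w) (hleaf : ∀ x, G.Adj v x → x = w)
    (σ : Finset (Sym2 V)) (hσ : IsScarf (delVert G v) σ) :
    IsScarf G (insert s(v, w) σ) ↔ ∀ e ∈ σ, ¬ Dist1 G e s(v, w) :=
  stmt11_general G v w hvw hleaf σ hσ
end

section
/- Let G be the 4-cycle on vertices a, b, c, d, with edge ideal I = (ab, bc, cd, da), and let t ≥ 1. Then the minimal generating set of I^t is exactly { m(i,j) := a^i b^j c^{t-i} d^{t-j} : 0 ≤ i ≤ t, 0 ≤ j ≤ t }, which has (t+1)^2 elements. A two-element set {m(i,j), m(i',j')} of distinct minimal generators is a Scarf face of I^t if and only if (|i - i'| = 1 and j = j') or (i = i' and |j - j'| = 1); moreover no Scarf face of I^t has more than two elements. Thus Scarf(I^t) is the 1-dimensional t × t grid complex (in particular, for t = 1 it is a 4-cycle). -/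
/-- Componentwise lcm (sup) of a finite set of exponent vectors. -/
def mLcm {V : Type*} (σ : Finset (V → ℕ)) : V → ℕ := σ.sup id

/-- `m` is a sum of `t` edge monomials of `G`, i.e. a generator of `I(G)^t`. -/
def IsEdgeSum {V : Type*} [DecidableEq V] (G : SimpleGraph V) (t : ℕ) (m : V → ℕ) : Prop :=
  ∃ s : Multiset (Sym2 V), (∀ e ∈ s, e ∈ G.edgeSet) ∧ Multiset.card s = t ∧
    (s.map edgeMon).sum = m

/-- `m` is a minimal generator of `I(G)^t`: it is a sum of `t` edge monomials of `G`,
minimal with respect to componentwise `≤` among all such sums. -/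
def IsMinGen {V : Type*} [DecidableEq V] (G : SimpleGraph V) (t : ℕ) (m : V → ℕ) : Prop :=
  IsEdgeSum G t m ∧ ∀ m', IsEdgeSum G t m' → m' ≤ m → m' = m

/-- `σ` is a Scarf face of `I(G)^t`: a set of minimal generators of `I(G)^t` whose lcm
is distinct from the lcm of any other set of minimal generators of `I(G)^t`. -/
def IsScarfPow {V : Type*} [DecidableEq V] (G : SimpleGraph V) (t : ℕ)
    (σ : Finset (V → ℕ)) : Prop :=
  (∀ m ∈ σ, IsMinGen G t m) ∧
    ∀ τ : Finset (V → ℕ), (∀ m ∈ τ, IsMinGen G t m) → mLcm τ = mLcm σ → τ = σ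

/-- The 4-cycle on vertices `a = 0`, `b = 1`, `c = 2`, `d = 3`. -/
def squareG : SimpleGraph (Fin 4) :=
  SimpleGraph.fromEdgeSet {s(0, 1), s(1, 2), s(2, 3), s(3, 0)}

/-!
Each edge of the 4-cycle contributes one to the exponents of `a` and `c` together and one to
those of `b` and `d` together, so the sums of `t` edge monomials are exactly the exponent vectors
with `a + c = b + d = t`: the points `(i, j)` of a `(t + 1) × (t + 1)` grid, pairwise
incomparable and hence all minimal. A grid point divides the lcm of a set of grid points iff it
lies in the set's bounding box, and that lcm is already the lcm of two opposite corners of the box.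
A Scarf face contains every generator dividing its lcm, so it is a pair of opposite corners whose
box contains no other grid point: a single point, or two neighbours of the grid.
-/

section ScarfPow

variable {V : Type*}

lemma le_mLcm {σ : Finset (V → ℕ)} {m : V → ℕ} (hm : m ∈ σ) : m ≤ mLcm σ :=
  Finset.le_sup (f := id) hm

variable [DecidableEq (V → ℕ)]

lemma mLcm_insert (m : V → ℕ) (σ : Finset (V → ℕ)) : mLcm (insert m σ) = m ⊔ mLcm σ :=
  Finset.sup_insert

lemma mLcm_pair (p q : V → ℕ) : mLcm {p, q} = p ⊔ q := by
  simp [mLcm]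

variable [DecidableEq V] {G : SimpleGraph V} {t : ℕ}

lemma IsScarfPow.mem_of_le_mLcm {σ : Finset (V → ℕ)} {m : V → ℕ} (hσ : IsScarfPow G t σ)
    (hm : IsMinGen G t m) (hle : m ≤ mLcm σ) : m ∈ σ :=
  Finset.insert_eq_self.1 <| hσ.2 _ ((Finset.forall_mem_insert _ _ _).2 ⟨hm, hσ.1⟩)
    (by rw [mLcm_insert, sup_eq_right.2 hle])

lemma mem_of_mLcm_eq_sup {τ : Finset (V → ℕ)} {p q : V → ℕ} (hp : IsMinGen G t p)
    (hq : IsMinGen G t q) (hpq : p ≠ q) (hτ : ∀ m ∈ τ, m = p ∨ m = q)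
    (hlcm : mLcm τ = p ⊔ q) : p ∈ τ := by
  by_contra hpτ
  have hτq : mLcm τ ≤ q := Finset.sup_le fun m hm => by
    obtain rfl | rfl := hτ m hm
    · exact absurd hm hpτ
    · exact le_rfl
  exact hpq (hq.2 p hp.1 (le_sup_left.trans (hlcm ▸ hτq)))

lemma isScarfPow_pair_iff {p q : V → ℕ} (hp : IsMinGen G t p) (hq : IsMinGen G t q)
    (hpq : p ≠ q) :
    IsScarfPow G t {p, q} ↔ ∀ m, IsMinGen G t m → m ≤ p ⊔ q → m = p ∨ m = q := by
  refine ⟨fun h m hm hle => by simpa using h.mem_of_le_mLcm hm (by rwa [mLcm_pair]), fun h => ?_⟩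
  refine ⟨by simp [hp, hq], fun τ hτ hlcm => ?_⟩
  rw [mLcm_pair] at hlcm
  have hτpq : ∀ m ∈ τ, m = p ∨ m = q := fun m hm => h m (hτ m hm) (hlcm ▸ le_mLcm hm)
  refine Finset.Subset.antisymm (fun m hm => by simpa using hτpq m hm) ?_
  have hpτ := mem_of_mLcm_eq_sup hp hq hpq hτpq hlcm
  have hqτ := mem_of_mLcm_eq_sup hq hp hpq.symm (fun m hm => (hτpq m hm).symm)
    (sup_comm p q ▸ hlcm)
  exact Finset.insert_subset_iff.2 ⟨hpτ, Finset.singleton_subset_iff.2 hqτ⟩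

end ScarfPow

lemma fin4_le_iff {f g : Fin 4 → ℕ} : f ≤ g ↔ f 0 ≤ g 0 ∧ f 1 ≤ g 1 ∧ f 2 ≤ g 2 ∧ f 3 ≤ g 3 := by
  simp [Pi.le_def, Fin.forall_fin_succ]

lemma fin4_eq_iff {f g : Fin 4 → ℕ} : f = g ↔ f 0 = g 0 ∧ f 1 = g 1 ∧ f 2 = g 2 ∧ f 3 = g 3 := by
  simp [funext_iff, Fin.forall_fin_succ]

lemma vec4_le_vec4_iff {a b c d a' b' c' d' : ℕ} :
    ![a, b, c, d] ≤ ![a', b', c', d'] ↔ a ≤ a' ∧ b ≤ b' ∧ c ≤ c' ∧ d ≤ d' :=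
  fin4_le_iff

lemma vec4_eq_vec4_iff {a b c d a' b' c' d' : ℕ} :
    ![a, b, c, d] = ![a', b', c', d'] ↔ a = a' ∧ b = b' ∧ c = c' ∧ d = d' :=
  fin4_eq_iff

lemma vec4_sup_vec4 (a b c d a' b' c' d' : ℕ) :
    ![a, b, c, d] ⊔ ![a', b', c', d'] = ![max a a', max b b', max c c', max d d'] := by
  ext x
  fin_cases x <;> rfl

lemma eq_vec4 (m : Fin 4 → ℕ) : m = ![m 0, m 1, m 2, m 3] :=
  (FinVec.etaExpand_eq m).symm

lemma mem_edgeSet_squareG {e : Sym2 (Fin 4)} :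
    e ∈ squareG.edgeSet ↔ e = s(0, 1) ∨ e = s(1, 2) ∨ e = s(2, 3) ∨ e = s(3, 0) := by
  induction e using Sym2.ind with
  | _ x y =>
    rw [SimpleGraph.mem_edgeSet, squareG, SimpleGraph.fromEdgeSet_adj]
    fin_cases x <;> fin_cases y <;> decide

lemma IsEdgeSum.squareG_add_eq {t : ℕ} {m : Fin 4 → ℕ} (h : IsEdgeSum squareG t m) :
    m 0 + m 2 = t ∧ m 1 + m 3 = t := by
  obtain ⟨s, hs, rfl, rfl⟩ := h
  induction s using Multiset.induction_on with
  | empty => simp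
  | cons e s ih =>
    have he : edgeMon e 0 + edgeMon e 2 = 1 ∧ edgeMon e 1 + edgeMon e 3 = 1 := by
      rcases mem_edgeSet_squareG.1 (hs e (Multiset.mem_cons_self e s)) with rfl | rfl | rfl | rfl <;>
        decide
    obtain ⟨h02, h13⟩ := ih fun f hf => hs f (Multiset.mem_cons_of_mem hf)
    simp only [Multiset.map_cons, Multiset.sum_cons, Multiset.card_cons, Pi.add_apply]
    omega

lemma isEdgeSum_squareG {t i j : ℕ} (hi : i ≤ t) (hj : j ≤ t) :
    IsEdgeSum squareG t ![i, j, t - i, t - j] := by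
  -- `x, y, z, w` copies of `ab, bc, cd, da` give the exponents `(x + w, x + y, y + z, z + w)`.
  refine ⟨Multiset.replicate (i + j - t) s(0, 1) + Multiset.replicate (min j (t - i)) s(1, 2)
    + Multiset.replicate (t - i - j) s(2, 3) + Multiset.replicate (min i (t - j)) s(3, 0),
    ?_, ?_, ?_⟩
  · intro e he
    simp only [Multiset.mem_add] at he
    rw [mem_edgeSet_squareG]
    rcases he with ((h | h) | h) | h <;> rw [Multiset.eq_of_mem_replicate h] <;> simp
  · simp only [Multiset.card_add, Multiset.card_replicate]
    omega
  · simp only [fin4_eq_iff, Multiset.map_add, Multiset.map_replicate, Multiset.sum_add,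
      Multiset.sum_replicate, Pi.add_apply, Pi.smul_apply, smul_eq_mul, edgeMon, Sym2.mem_iff,
      Fin.isValue, Fin.reduceEq, Matrix.cons_val_zero, Matrix.cons_val_one, Matrix.cons_val,
      or_true, or_false, or_self, if_true, if_false, mul_one, mul_zero, add_zero, zero_add]
    omega

lemma isMinGen_squareG_iff {t : ℕ} {m : Fin 4 → ℕ} :
    IsMinGen squareG t m ↔ m 0 + m 2 = t ∧ m 1 + m 3 = t := by
  refine ⟨fun h => h.1.squareG_add_eq, fun ⟨h02, h13⟩ => ⟨?_, fun m' hm' hle => ?_⟩⟩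
  · rw [eq_vec4 m, show m 2 = t - m 0 by omega, show m 3 = t - m 1 by omega]
    exact isEdgeSum_squareG (by omega) (by omega)
  · obtain ⟨h02', h13'⟩ := hm'.squareG_add_eq
    rw [fin4_le_iff] at hle
    rw [fin4_eq_iff]
    omega

lemma isMinGen_squareG_iff_exists {t : ℕ} {m : Fin 4 → ℕ} :
    IsMinGen squareG t m ↔ ∃ i j : ℕ, i ≤ t ∧ j ≤ t ∧ m = ![i, j, t - i, t - j] := by
  rw [isMinGen_squareG_iff]
  constructor
  · rintro ⟨h02, h13⟩
    refine ⟨m 0, m 1, by omega, by omega, ?_⟩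
    refine (eq_vec4 m).trans ?_
    rw [vec4_eq_vec4_iff]
    omega
  · rintro ⟨i, j, hi, hj, rfl⟩
    exact show i + (t - i) = t ∧ j + (t - j) = t by omega

lemma ncard_isMinGen_squareG (t : ℕ) : {m | IsMinGen squareG t m}.ncard = (t + 1) ^ 2 := by
  have himage : {m | IsMinGen squareG t m} =
      (fun p : ℕ × ℕ => ![p.1, p.2, t - p.1, t - p.2]) '' (Set.Iic t ×ˢ Set.Iic t) := by
    ext m
    simp [isMinGen_squareG_iff_exists, eq_comm, and_assoc]
  have hinj : Function.Injective fun p : ℕ × ℕ => ![p.1, p.2, t - p.1, t - p.2] :=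
    fun p q h => Prod.ext (congrFun h 0) (congrFun h 1)
  rw [himage, Set.ncard_image_of_injective _ hinj, Set.ncard_prod]
  simp [sq]

lemma exists_ne_mem_box_of_not_adjacent {i j i' j' : ℕ} (hne : (i, j) ≠ (i', j'))
    (hadj : ¬(((i = i' + 1 ∨ i' = i + 1) ∧ j = j') ∨ (i = i' ∧ (j = j' + 1 ∨ j' = j + 1)))) :
    ∃ u v, min i i' ≤ u ∧ u ≤ max i i' ∧ min j j' ≤ v ∧ v ≤ max j j' ∧
      (u, v) ≠ (i, j) ∧ (u, v) ≠ (i', j') := by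
  simp only [ne_eq, Prod.mk.injEq] at hne ⊢
  by_cases hi : i = i'
  · exact ⟨i, min j j' + 1, by omega⟩
  by_cases hj : j = j'
  · exact ⟨min i i' + 1, j, by omega⟩
  · exact ⟨i, j', by omega⟩

lemma isScarfPow_squareG_pair_iff {t i j i' j' : ℕ} (hi : i ≤ t) (hj : j ≤ t) (hi' : i' ≤ t)
    (hj' : j' ≤ t) (hne : (i, j) ≠ (i', j')) :
    IsScarfPow squareG t {![i, j, t - i, t - j], ![i', j', t - i', t - j']} ↔
      ((i = i' + 1 ∨ i' = i + 1) ∧ j = j') ∨ (i = i' ∧ (j = j' + 1 ∨ j' = j + 1)) := by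
  have hgen {u v : ℕ} (hu : u ≤ t) (hv : v ≤ t) : IsMinGen squareG t ![u, v, t - u, t - v] :=
    isMinGen_squareG_iff_exists.2 ⟨u, v, hu, hv, rfl⟩
  rw [isScarfPow_pair_iff (hgen hi hj) (hgen hi' hj')
    (fun h => hne (Prod.ext (congrFun h 0) (congrFun h 1)))]
  constructor
  · intro h
    by_contra hadj
    obtain ⟨u, v, hu, hu', hv, hv', hij, hij'⟩ := exists_ne_mem_box_of_not_adjacent hne hadj
    have huv := h ![u, v, t - u, t - v] (hgen (by omega) (by omega))
      (by rw [vec4_sup_vec4, vec4_le_vec4_iff]; omega)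
    simp only [ne_eq, Prod.mk.injEq, vec4_eq_vec4_iff] at hij hij' huv
    omega
  · rintro hadj m hm hle
    obtain ⟨u, v, hu, hv, rfl⟩ := isMinGen_squareG_iff_exists.1 hm
    rw [vec4_sup_vec4, vec4_le_vec4_iff] at hle
    rw [vec4_eq_vec4_iff, vec4_eq_vec4_iff]
    omega

lemma exists_mLcm_eq_sup_squareG {t : ℕ} {σ : Finset (Fin 4 → ℕ)} (hne : σ.Nonempty)
    (hσ : ∀ m ∈ σ, IsMinGen squareG t m) :
    ∃ p q, IsMinGen squareG t p ∧ IsMinGen squareG t q ∧ mLcm σ = p ⊔ q := by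
  set L := mLcm σ
  have hLt : L ≤ fun _ => t := Finset.sup_le fun m hm => show m ≤ _ by
    obtain ⟨h02, h13⟩ := isMinGen_squareG_iff.1 (hσ m hm)
    rw [fin4_le_iff]
    omega
  obtain ⟨m, hm⟩ := hne
  have hmL : m ≤ L := le_mLcm hm
  obtain ⟨h02, h13⟩ := isMinGen_squareG_iff.1 (hσ m hm)
  rw [fin4_le_iff] at hLt hmL
  -- the corners `(min i, min j)` and `(max i, max j)` of the bounding box of `σ`
  refine ⟨![t - L 2, t - L 3, L 2, L 3], ![L 0, L 1, t - L 0, t - L 1], ?_, ?_, ?_⟩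
  · exact isMinGen_squareG_iff.2 (show t - L 2 + L 2 = t ∧ t - L 3 + L 3 = t by omega)
  · exact isMinGen_squareG_iff.2 (show L 0 + (t - L 0) = t ∧ L 1 + (t - L 1) = t by omega)
  · rw [vec4_sup_vec4]
    refine (eq_vec4 L).trans ?_
    rw [vec4_eq_vec4_iff]
    omega

lemma IsScarfPow.card_le_two_squareG {t : ℕ} {σ : Finset (Fin 4 → ℕ)}
    (h : IsScarfPow squareG t σ) : σ.card ≤ 2 := by
  obtain rfl | hne := σ.eq_empty_or_nonempty
  · simp
  obtain ⟨p, q, hp, hq, hL⟩ := exists_mLcm_eq_sup_squareG hne h.1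
  rw [← h.2 {p, q} (by simp [hp, hq]) (by rw [mLcm_pair, hL])]
  exact Finset.card_le_two

theorem stmt19_general (t : ℕ) :
    (∀ m : Fin 4 → ℕ, IsMinGen squareG t m ↔
        ∃ i j : ℕ, i ≤ t ∧ j ≤ t ∧ m = ![i, j, t - i, t - j]) ∧
    {m : Fin 4 → ℕ | IsMinGen squareG t m}.ncard = (t + 1) ^ 2 ∧
    (∀ i j i' j' : ℕ, i ≤ t → j ≤ t → i' ≤ t → j' ≤ t → (i, j) ≠ (i', j') →
        (IsScarfPow squareG t {![i, j, t - i, t - j], ![i', j', t - i', t - j']} ↔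
          (((i = i' + 1 ∨ i' = i + 1) ∧ j = j') ∨
            (i = i' ∧ (j = j' + 1 ∨ j' = j + 1))))) ∧
    (∀ σ : Finset (Fin 4 → ℕ), IsScarfPow squareG t σ → σ.card ≤ 2) :=
  ⟨fun _ => isMinGen_squareG_iff_exists, ncard_isMinGen_squareG t,
    fun _ _ _ _ hi hj hi' hj' hne => isScarfPow_squareG_pair_iff hi hj hi' hj' hne,
    fun _ h => h.card_le_two_squareG⟩

theorem stmt19 (t : ℕ) (ht : 1 ≤ t) :
    (∀ m : Fin 4 → ℕ, IsMinGen squareG t m ↔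
        ∃ i j : ℕ, i ≤ t ∧ j ≤ t ∧ m = ![i, j, t - i, t - j]) ∧
    {m : Fin 4 → ℕ | IsMinGen squareG t m}.ncard = (t + 1) ^ 2 ∧
    (∀ i j i' j' : ℕ, i ≤ t → j ≤ t → i' ≤ t → j' ≤ t → (i, j) ≠ (i', j') →
        (IsScarfPow squareG t {![i, j, t - i, t - j], ![i', j', t - i', t - j']} ↔
          (((i = i' + 1 ∨ i' = i + 1) ∧ j = j') ∨
            (i = i' ∧ (j = j' + 1 ∨ j' = j + 1))))) ∧
    (∀ σ : Finset (Fin 4 → ℕ), IsScarfPow squareG t σ → σ.card ≤ 2) :=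
  stmt19_general t
end
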